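/- arXiv:1305.1079 — 3 statements merged into one kernel-verified Lean document; each statement's English description precedes it below -/
import Mathlib

section
/- Suppose G(s) = C(sI−A)⁻¹B has a minimal block-structured realization with A = blkdiag(A₁, 0_{n₂×n₂}, A₃), A₁ nonsingular, A₃ = [[0, I_k],[0,0]]. Then the matrix [C₂ C₃ₐ] has full column rank, the matrix [B₂; B₃ᵦ] has full row rank, m ≥ k + n₂, and the subsystem realization (A₁, B₁, C₁) is minimal (i.e., (A₁,B₁) is controllable and (A₁,C₁) is observable). -/
open Matrix Filter
open scoped Topology ComplexOrder

noncomputable section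

namespace NIPaper

/-- A square `m × m` real-rational transfer function matrix. -/
abbrev TF (m : ℕ) := Matrix (Fin m) (Fin m) (RatFunc ℝ)

/-- Complex evaluation of a real-rational transfer function matrix. -/
def evalTF {m : ℕ} (G : TF m) (s : ℂ) : Matrix (Fin m) (Fin m) ℂ :=
  fun i j => (G i j).eval (algebraMap ℝ ℂ) s

/-- Real evaluation of a real-rational transfer function matrix. -/
def evalTFR {m : ℕ} (G : TF m) (x : ℝ) : Matrix (Fin m) (Fin m) ℝ :=
  fun i j => (G i j).eval (RingHom.id ℝ) x

/-- `s ∈ ℂ` is a pole of the transfer function matrix `G`. -/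
def IsPoleAt {m : ℕ} (G : TF m) (s : ℂ) : Prop :=
  ∃ i j, ((G i j).denom.map (algebraMap ℝ ℂ)).IsRoot s

/-- `G` is strictly proper. -/
def StrictlyProper {m : ℕ} (G : TF m) : Prop :=
  ∀ i j, (G i j).num.degree < (G i j).denom.degree

/-- `G` is negative imaginary (Definition 2 of the paper, allowing poles at the origin). -/
def IsNI {m : ℕ} (G : TF m) : Prop :=
  (∀ s : ℂ, 0 < s.re → ¬ IsPoleAt G s) ∧
  (∀ ω : ℝ, 0 < ω → ¬ IsPoleAt G (Complex.I * ω) →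
    (Complex.I • (evalTF G (Complex.I * ω) - (evalTF G (Complex.I * ω))ᴴ)).PosSemidef) ∧
  (∀ ω : ℝ, 0 < ω → IsPoleAt G (Complex.I * ω) →
    (∀ i j, ((G i j).denom.map (algebraMap ℝ ℂ)).rootMultiplicity (Complex.I * ω) ≤ 1) ∧
    ∃ K : Matrix (Fin m) (Fin m) ℂ,
      Tendsto (fun s : ℂ => (s - Complex.I * ω) • Complex.I • evalTF G s)
        (𝓝[≠] (Complex.I * (ω : ℂ))) (𝓝 K) ∧ K.PosSemidef) ∧
  (IsPoleAt G 0 →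
    (∀ k : ℕ, 3 ≤ k →
      Tendsto (fun s : ℂ => s ^ k • evalTF G s) (𝓝[≠] (0 : ℂ)) (𝓝 0)) ∧
    ∃ K : Matrix (Fin m) (Fin m) ℂ,
      Tendsto (fun s : ℂ => s ^ 2 • evalTF G s) (𝓝[≠] (0 : ℂ)) (𝓝 K) ∧ K.PosSemidef)

/-- `G` is strictly negative imaginary. -/
def IsSNI {m : ℕ} (G : TF m) : Prop :=
  (∀ s : ℂ, 0 ≤ s.re → ¬ IsPoleAt G s) ∧
  (∀ ω : ℝ, 0 < ω →
    (Complex.I • (evalTF G (Complex.I * ω) - (evalTF G (Complex.I * ω))ᴴ)).PosDef)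

/-- `R` is positive real. -/
def IsPR {m : ℕ} (R : TF m) : Prop :=
  (∀ s : ℂ, 0 < s.re → ¬ IsPoleAt R s) ∧
  (∀ ω : ℝ, ¬ IsPoleAt R (Complex.I * ω) →
    (evalTF R (Complex.I * ω) + (evalTF R (Complex.I * ω))ᴴ).PosSemidef) ∧
  (∀ ω : ℝ, IsPoleAt R (Complex.I * ω) →
    ∃ K : Matrix (Fin m) (Fin m) ℂ,
      Tendsto (fun s : ℂ => (s - Complex.I * ω) • evalTF R s)
        (𝓝[≠] (Complex.I * (ω : ℂ))) (𝓝 K) ∧ K.PosSemidef)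

/-- `G₂ = lim_{s→0} s² G(s)` (a real matrix, stated via its complex image). -/
def IsG2 {m : ℕ} (G : TF m) (G2 : Matrix (Fin m) (Fin m) ℝ) : Prop :=
  Tendsto (fun s : ℂ => s ^ 2 • evalTF G s) (𝓝[≠] (0 : ℂ))
    (𝓝 (G2.map (algebraMap ℝ ℂ)))

/-- `G₁ = lim_{s→0} s (G(s) - G₂/s²)`. -/
def IsG1 {m : ℕ} (G : TF m) (G2 G1 : Matrix (Fin m) (Fin m) ℝ) : Prop :=
  Tendsto (fun s : ℂ => s • (evalTF G s - (s ^ 2)⁻¹ • G2.map (algebraMap ℝ ℂ)))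
    (𝓝[≠] (0 : ℂ)) (𝓝 (G1.map (algebraMap ℝ ℂ)))

/-- `G₀ = lim_{s→0} (G(s) - G₂/s² - G₁/s)`. -/
def IsG0 {m : ℕ} (G : TF m) (G2 G1 G0 : Matrix (Fin m) (Fin m) ℝ) : Prop :=
  Tendsto (fun s : ℂ =>
      evalTF G s - (s ^ 2)⁻¹ • G2.map (algebraMap ℝ ℂ) - s⁻¹ • G1.map (algebraMap ℝ ℂ))
    (𝓝[≠] (0 : ℂ)) (𝓝 (G0.map (algebraMap ℝ ℂ)))

/-- `(A,B)` is controllable: the controllability matrix `[B AB ⋯ A^{n-1}B]` has full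
row rank, expressed via triviality of its left kernel. -/
def Controllable {n m : Type*} [Fintype n] [DecidableEq n] [Fintype m]
    (A : Matrix n n ℝ) (B : Matrix n m ℝ) : Prop :=
  ∀ x : n → ℝ, (∀ k < Fintype.card n, x ᵥ* (A ^ k * B) = 0) → x = 0

/-- `(A,C)` is observable: the observability matrix `[C; CA; ⋯; CA^{n-1}]` has full
column rank, expressed via triviality of its kernel. -/
def Observable {n p : Type*} [Fintype n] [DecidableEq n] [Fintype p]
    (A : Matrix n n ℝ) (C : Matrix p n ℝ) : Prop :=
  ∀ x : n → ℝ, (∀ k < Fintype.card n, (C * A ^ k) *ᵥ x = 0) → x = 0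

/-- A realization `(A,B,C)` is minimal. -/
def Minimal {n m p : Type*} [Fintype n] [DecidableEq n] [Fintype m] [Fintype p]
    (A : Matrix n n ℝ) (B : Matrix n m ℝ) (C : Matrix p n ℝ) : Prop :=
  Controllable A B ∧ Observable A C

/-- `(A,B,C,D)` is a state-space realization of `G`, i.e. `G(s) = C (sI - A)⁻¹ B + D`. -/
def IsRealization {m : ℕ} {n : Type*} [Fintype n] [DecidableEq n] (G : TF m)
    (A : Matrix n n ℝ) (B : Matrix n (Fin m) ℝ) (C : Matrix (Fin m) n ℝ)
    (D : Matrix (Fin m) (Fin m) ℝ) : Prop :=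
  ∀ s : ℂ, IsUnit (s • (1 : Matrix n n ℂ) - A.map (algebraMap ℝ ℂ)) →
    evalTF G s =
      C.map (algebraMap ℝ ℂ) * (s • (1 : Matrix n n ℂ) - A.map (algebraMap ℝ ℂ))⁻¹ *
        B.map (algebraMap ℝ ℂ) + D.map (algebraMap ℝ ℂ)

/-- A real square matrix is Hurwitz if each of its eigenvalues has negative real part. -/
def IsHurwitz {n : Type*} [Fintype n] [DecidableEq n] (M : Matrix n n ℝ) : Prop :=
  ∀ μ ∈ spectrum ℂ (M.map (algebraMap ℝ ℂ)), μ.re < 0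

/-- The closed-loop system matrix `Ă` of the positive-feedback interconnection of a
strictly proper plant `(A,B,C)` and a controller `(Ā,B̄,C̄,D̄)`. -/
def closedLoop {m : ℕ} {n nb : Type*} [Fintype n] [Fintype nb]
    (A : Matrix n n ℝ) (B : Matrix n (Fin m) ℝ) (C : Matrix (Fin m) n ℝ)
    (Ab : Matrix nb nb ℝ) (Bb : Matrix nb (Fin m) ℝ) (Cb : Matrix (Fin m) nb ℝ)
    (Db : Matrix (Fin m) (Fin m) ℝ) : Matrix (n ⊕ nb) (n ⊕ nb) ℝ :=
  Matrix.fromBlocks (A + B * Db * C) (B * Cb) (Bb * C) Ab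

/-- `𝒫(X,Y) = X - X Y (Yᵀ X Y)⁻¹ Yᵀ X`. -/
def Pfun {m : ℕ} {r : Type*} [Fintype r] [DecidableEq r]
    (X : Matrix (Fin m) (Fin m) ℝ) (Y : Matrix (Fin m) r ℝ) : Matrix (Fin m) (Fin m) ℝ :=
  X - X * Y * (Yᵀ * X * Y)⁻¹ * Yᵀ * X

end NIPaper

/-!
A vector in `ker A` that `C` annihilates is unobservable, so by minimality `C` is injective on
`ker A`; dually `B` is injective from the left on the left kernel of `A`. For the block state
matrix, `ker A` consists of the `n₂`-coordinates and the first half of the nilpotent block, its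
left kernel of the `n₂`-coordinates and the second half; this gives the two rank statements and
`k + n₂ ≤ m`. Since `A` is block diagonal, the Kalman tests of `(A, B, C)` restrict, via
Cayley–Hamilton, to those of `(A₁, B₁, C₁)`.
-/

namespace NIPaper

section Observability

variable {n m p : Type*} [Fintype n] [DecidableEq n]

theorem mulVec_pow_eq_zero_of_forall_lt_card {A : Matrix n n ℝ} {C : Matrix p n ℝ} {x : n → ℝ}
    (hx : ∀ k < Fintype.card n, (C * A ^ k) *ᵥ x = 0) (k : ℕ) : (C * A ^ k) *ᵥ x = 0 := by
  -- Cayley–Hamilton: `A ^ k` is a combination of the powers `A ^ i` with `i < card n`.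
  rw [pow_eq_aeval_mod_charpoly, Polynomial.aeval_eq_sum_range, Matrix.mul_sum, Matrix.sum_mulVec]
  set q := Polynomial.X ^ k %ₘ A.charpoly
  have hq : ∀ i, q.coeff i ≠ 0 → i < Fintype.card n := fun i hi => by
    have := (Polynomial.le_degree_of_ne_zero hi).trans_lt
      (Polynomial.degree_modByMonic_lt _ A.charpoly_monic)
    rwa [A.charpoly_degree_eq_dim, Nat.cast_lt] at this
  refine Finset.sum_eq_zero fun i _ => ?_
  by_cases hi : q.coeff i = 0
  · simp [hi]
  · rw [Matrix.mul_smul, Matrix.smul_mulVec, hx i (hq i hi), smul_zero]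

variable [Fintype m] [Fintype p]

theorem observable_iff_forall_pow {A : Matrix n n ℝ} {C : Matrix p n ℝ} :
    Observable A C ↔ ∀ x, (∀ k, (C * A ^ k) *ᵥ x = 0) → x = 0 :=
  ⟨fun h x hx => h x fun k _ => hx k,
    fun h x hx => h x (mulVec_pow_eq_zero_of_forall_lt_card hx)⟩

theorem controllable_iff_observable_transpose {A : Matrix n n ℝ} {B : Matrix n m ℝ} :
    Controllable A B ↔ Observable Aᵀ Bᵀ := by
  simp only [Controllable, Observable, ← transpose_pow, ← transpose_mul, mulVec_transpose]

theorem Observable.eq_zero_of_mulVec_eq_zero {A : Matrix n n ℝ} {C : Matrix p n ℝ}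
    (h : Observable A C) {x : n → ℝ} (hAx : A *ᵥ x = 0) (hCx : C *ᵥ x = 0) : x = 0 := by
  refine observable_iff_forall_pow.mp h x fun k => ?_
  cases k with
  | zero => simpa using hCx
  | succ k => rw [pow_succ, ← Matrix.mul_assoc, ← mulVec_mulVec, hAx, mulVec_zero]

theorem Controllable.eq_zero_of_vecMul_eq_zero {A : Matrix n n ℝ} {B : Matrix n m ℝ}
    (h : Controllable A B) {x : n → ℝ} (hxA : x ᵥ* A = 0) (hxB : x ᵥ* B = 0) : x = 0 :=
  (controllable_iff_observable_transpose.mp h).eq_zero_of_mulVec_eq_zero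
    (by rwa [mulVec_transpose]) (by rwa [mulVec_transpose])

variable {n₁ n₂ : Type*} [Fintype n₁] [DecidableEq n₁] [Fintype n₂] [DecidableEq n₂]

theorem Observable.of_fromBlocks {A₁ : Matrix n₁ n₁ ℝ} {A₂ : Matrix n₂ n₂ ℝ}
    {C₁ : Matrix p n₁ ℝ} {C₂ : Matrix p n₂ ℝ}
    (h : Observable (fromBlocks A₁ 0 0 A₂) (fromCols C₁ C₂)) : Observable A₁ C₁ := by
  refine observable_iff_forall_pow.mpr fun x hx => funext fun i => ?_
  refine congrFun (observable_iff_forall_pow.mp h (Sum.elim x 0) fun k => ?_) (Sum.inl i)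
  rw [fromBlocks_diagonal_pow, ← mulVec_mulVec, fromBlocks_mulVec, Sum.elim_comp_inl,
    Sum.elim_comp_inr, fromCols_mulVec_sumElim]
  simpa [mulVec_mulVec] using hx k

theorem Controllable.of_fromBlocks {A₁ : Matrix n₁ n₁ ℝ} {A₂ : Matrix n₂ n₂ ℝ}
    {B₁ : Matrix n₁ m ℝ} {B₂ : Matrix n₂ m ℝ}
    (h : Controllable (fromBlocks A₁ 0 0 A₂) (fromRows B₁ B₂)) : Controllable A₁ B₁ := by
  rw [controllable_iff_observable_transpose, fromBlocks_transpose, transpose_fromRows] at h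
  simpa [controllable_iff_observable_transpose] using h.of_fromBlocks

end Observability

section Rank

variable {K m n : Type*} [Field K] [Fintype m] [Fintype n]

theorem rank_eq_card_height_of_vecMul_eq_zero {M : Matrix m n K}
    (h : ∀ y, y ᵥ* M = 0 → y = 0) : M.rank = Fintype.card m :=
  LinearIndependent.rank_matrix <| vecMul_injective_iff.mp fun y z hyz =>
    sub_eq_zero.mp (h _ (by rw [sub_vecMul]; exact sub_eq_zero.mpr hyz))

theorem rank_eq_card_width_of_mulVec_eq_zero {M : Matrix m n K}
    (h : ∀ x, M *ᵥ x = 0 → x = 0) : M.rank = Fintype.card n := by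
  rw [← rank_transpose]
  exact rank_eq_card_height_of_vecMul_eq_zero fun x hx => h x (by rwa [← vecMul_transpose])

end Rank

section BlockStructure

def blockStateMatrix {n₁ : Type*} (A₁ : Matrix n₁ n₁ ℝ) (n₂ κ : Type*) [DecidableEq κ] :
    Matrix (n₁ ⊕ n₂ ⊕ κ ⊕ κ) (n₁ ⊕ n₂ ⊕ κ ⊕ κ) ℝ :=
  fromBlocks A₁ 0 0 (fromBlocks (0 : Matrix n₂ n₂ ℝ) 0 0 (fromBlocks 0 (1 : Matrix κ κ ℝ) 0 0))

variable {m p n₁ n₂ κ : Type*} [Fintype m] [Fintype p] [Fintype n₁] [DecidableEq n₁]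
  [Fintype n₂] [DecidableEq n₂] [Fintype κ] [DecidableEq κ]

theorem Observable.rank_fromCols_of_blockStateMatrix {A₁ : Matrix n₁ n₁ ℝ}
    {C₁ : Matrix p n₁ ℝ} {C₂ : Matrix p n₂ ℝ} {C₃ C₄ : Matrix p κ ℝ}
    (h : Observable (blockStateMatrix A₁ n₂ κ) (fromCols C₁ (fromCols C₂ (fromCols C₃ C₄)))) :
    (fromCols C₂ C₃).rank = Fintype.card n₂ + Fintype.card κ := by
  rw [← Fintype.card_sum]
  refine rank_eq_card_width_of_mulVec_eq_zero fun y hy => ?_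
  have hy0 := h.eq_zero_of_mulVec_eq_zero
    (x := Sum.elim 0 (Sum.elim (y ∘ .inl) (Sum.elim (y ∘ .inr) 0)))
    (by simp [blockStateMatrix, fromBlocks_mulVec]) ?_
  · ext (i | i)
    · exact congrFun hy0 (.inr (.inl i))
    · exact congrFun hy0 (.inr (.inr (.inl i)))
  · simpa [fromCols_mulVec_sumElim, fromCols_mulVec] using hy

theorem Controllable.rank_fromRows_of_blockStateMatrix {A₁ : Matrix n₁ n₁ ℝ}
    {B₁ : Matrix n₁ m ℝ} {B₂ : Matrix n₂ m ℝ} {B₃ B₄ : Matrix κ m ℝ}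
    (h : Controllable (blockStateMatrix A₁ n₂ κ) (fromRows B₁ (fromRows B₂ (fromRows B₃ B₄)))) :
    (fromRows B₂ B₄).rank = Fintype.card n₂ + Fintype.card κ := by
  rw [← Fintype.card_sum]
  refine rank_eq_card_height_of_vecMul_eq_zero fun y hy => ?_
  have hy0 := h.eq_zero_of_vecMul_eq_zero
    (x := Sum.elim 0 (Sum.elim (y ∘ .inl) (Sum.elim 0 (y ∘ .inr))))
    (by simp [blockStateMatrix, vecMul_fromBlocks]) ?_
  · ext (i | i)
    · exact congrFun hy0 (.inr (.inl i))
    · exact congrFun hy0 (.inr (.inr (.inr i)))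
  · simpa [sumElim_vecMul_fromRows, vecMul_fromRows] using hy

end BlockStructure

theorem stmt11_general {m n1 n2 k : ℕ}
    (A1 : Matrix (Fin n1) (Fin n1) ℝ)
    (B1 : Matrix (Fin n1) (Fin m) ℝ) (B2 : Matrix (Fin n2) (Fin m) ℝ)
    (B3a B3b : Matrix (Fin k) (Fin m) ℝ)
    (C1 : Matrix (Fin m) (Fin n1) ℝ) (C2 : Matrix (Fin m) (Fin n2) ℝ)
    (C3a C3b : Matrix (Fin m) (Fin k) ℝ)
    (A : Matrix (Fin n1 ⊕ (Fin n2 ⊕ (Fin k ⊕ Fin k))) (Fin n1 ⊕ (Fin n2 ⊕ (Fin k ⊕ Fin k))) ℝ)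
    (B : Matrix (Fin n1 ⊕ (Fin n2 ⊕ (Fin k ⊕ Fin k))) (Fin m) ℝ)
    (C : Matrix (Fin m) (Fin n1 ⊕ (Fin n2 ⊕ (Fin k ⊕ Fin k))) ℝ)
    (hA : A = Matrix.fromBlocks A1 0 0
        (Matrix.fromBlocks (0 : Matrix (Fin n2) (Fin n2) ℝ) 0 0
          (Matrix.fromBlocks 0 (1 : Matrix (Fin k) (Fin k) ℝ) 0 0)))
    (hB : B = Matrix.fromRows B1 (Matrix.fromRows B2 (Matrix.fromRows B3a B3b)))
    (hC : C = Matrix.fromCols C1 (Matrix.fromCols C2 (Matrix.fromCols C3a C3b)))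
    (hmin : Minimal A B C) :
    (Matrix.fromCols C2 C3a).rank = n2 + k ∧
    (Matrix.fromRows B2 B3b).rank = n2 + k ∧
    k + n2 ≤ m ∧
    Controllable A1 B1 ∧ Observable A1 C1 := by
  subst hA hB hC
  obtain ⟨hctrb, hobs⟩ := hmin
  have hCrank : (fromCols C2 C3a).rank = n2 + k := by
    simpa using hobs.rank_fromCols_of_blockStateMatrix
  have hBrank : (fromRows B2 B3b).rank = n2 + k := by
    simpa using hctrb.rank_fromRows_of_blockStateMatrix
  have hkm : k + n2 ≤ m := by
    simpa [hCrank, add_comm] using (fromCols C2 C3a).rank_le_card_height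
  exact ⟨hCrank, hBrank, hkm, hctrb.of_fromBlocks, hobs.of_fromBlocks⟩

/-- Lemma 2: rank properties of a minimal block-structured realization. -/
theorem stmt11 {m n1 n2 k : ℕ}
    (G : TF m)
    (A1 : Matrix (Fin n1) (Fin n1) ℝ) (hA1 : IsUnit A1)
    (B1 : Matrix (Fin n1) (Fin m) ℝ) (B2 : Matrix (Fin n2) (Fin m) ℝ)
    (B3a B3b : Matrix (Fin k) (Fin m) ℝ)
    (C1 : Matrix (Fin m) (Fin n1) ℝ) (C2 : Matrix (Fin m) (Fin n2) ℝ)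
    (C3a C3b : Matrix (Fin m) (Fin k) ℝ)
    (A : Matrix (Fin n1 ⊕ (Fin n2 ⊕ (Fin k ⊕ Fin k))) (Fin n1 ⊕ (Fin n2 ⊕ (Fin k ⊕ Fin k))) ℝ)
    (B : Matrix (Fin n1 ⊕ (Fin n2 ⊕ (Fin k ⊕ Fin k))) (Fin m) ℝ)
    (C : Matrix (Fin m) (Fin n1 ⊕ (Fin n2 ⊕ (Fin k ⊕ Fin k))) ℝ)
    (hA : A = Matrix.fromBlocks A1 0 0
        (Matrix.fromBlocks (0 : Matrix (Fin n2) (Fin n2) ℝ) 0 0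
          (Matrix.fromBlocks 0 (1 : Matrix (Fin k) (Fin k) ℝ) 0 0)))
    (hB : B = Matrix.fromRows B1 (Matrix.fromRows B2 (Matrix.fromRows B3a B3b)))
    (hC : C = Matrix.fromCols C1 (Matrix.fromCols C2 (Matrix.fromCols C3a C3b)))
    (hreal : IsRealization G A B C 0) (hmin : Minimal A B C) :
    (Matrix.fromCols C2 C3a).rank = n2 + k ∧
    (Matrix.fromRows B2 B3b).rank = n2 + k ∧
    k + n2 ≤ m ∧
    Controllable A1 B1 ∧ Observable A1 C1 :=
  stmt11_general A1 B1 B2 B3a B3b C1 C2 C3a C3b A B C hA hB hC hmin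

end NIPaper
end
end

section
/- Let A, B ∈ ℂ^{n×n} be complex matrices such that j(A − A*) is positive semidefinite and j(B − B*) is positive definite. Then det(I − AB) ≠ 0. -/
open Matrix Filter
open scoped Topology ComplexOrder

noncomputable section

namespace NIPaper

/-!
If `det (1 - A * B) = 0`, pick `x ≠ 0` with `A (B x) = x` and put `y = B x`. The quadratic form
of `j (M - Mᴴ)` at `v` is `-2 Im (v* M v)`, and `y* A y = y* x` and `x* B x = x* y` are complex
conjugates, so the two forms at `y` and at `x` cancel. This contradicts `j (A - Aᴴ) ≥ 0` together
with `j (B - Bᴴ) > 0`.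
-/

section

variable {ι : Type*} [Fintype ι]

lemma star_dotProduct_conjTranspose_mulVec {α : Type*} [CommSemiring α] [StarRing α]
    (M : Matrix ι ι α) (x : ι → α) :
    star x ⬝ᵥ (Mᴴ *ᵥ x) = star (star x ⬝ᵥ (M *ᵥ x)) := by
  rw [dotProduct_mulVec, ← star_mulVec, star_dotProduct]

lemma star_dotProduct_I_smul_sub_conjTranspose_mulVec (M : Matrix ι ι ℂ) (x : ι → ℂ) :
    star x ⬝ᵥ ((Complex.I • (M - Mᴴ)) *ᵥ x) =
      Complex.I * (star x ⬝ᵥ (M *ᵥ x) - star (star x ⬝ᵥ (M *ᵥ x))) := by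
  rw [smul_mulVec, sub_mulVec, dotProduct_smul, dotProduct_sub,
    star_dotProduct_conjTranspose_mulVec, smul_eq_mul]

theorem mulVec_mulVec_ne_self_of_posSemidef_of_posDef {A B : Matrix ι ι ℂ}
    (hA : (Complex.I • (A - Aᴴ)).PosSemidef) (hB : (Complex.I • (B - Bᴴ)).PosDef)
    {x : ι → ℂ} (hx : x ≠ 0) : A *ᵥ (B *ᵥ x) ≠ x := by
  intro hfix
  set y := B *ᵥ x
  have hAy : star y ⬝ᵥ (A *ᵥ y) = star (star x ⬝ᵥ (B *ᵥ x)) := by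
    rw [hfix, star_dotProduct]
  have hcancel : star y ⬝ᵥ ((Complex.I • (A - Aᴴ)) *ᵥ y) =
      -(star x ⬝ᵥ ((Complex.I • (B - Bᴴ)) *ᵥ x)) := by
    rw [star_dotProduct_I_smul_sub_conjTranspose_mulVec,
      star_dotProduct_I_smul_sub_conjTranspose_mulVec, hAy, star_star]
    ring
  have hA_nonneg := hA.dotProduct_mulVec_nonneg y
  rw [hcancel, neg_nonneg] at hA_nonneg
  exact (hB.dotProduct_mulVec_pos hx).not_ge hA_nonneg

end

/-- Lemma 7: if `j(A - A*) ≥ 0` and `j(B - B*) > 0` then `det(I - AB) ≠ 0`. -/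
theorem stmt15 {n : ℕ} (A B : Matrix (Fin n) (Fin n) ℂ)
    (hA : (Complex.I • (A - Aᴴ)).PosSemidef)
    (hB : (Complex.I • (B - Bᴴ)).PosDef) :
    (1 - A * B).det ≠ 0 := by
  intro hdet
  obtain ⟨x, hx, hx_ker⟩ := exists_mulVec_eq_zero_iff.2 hdet
  refine mulVec_mulVec_ne_self_of_posSemidef_of_posDef hA hB hx ?_
  rw [sub_mulVec, one_mulVec, sub_eq_zero] at hx_ker
  rw [mulVec_mulVec, ← hx_ker]

end NIPaper
end
end

section
/- Suppose the transfer function matrix G(s) = C(sI−A)⁻¹B with minimal block-structured realization is NI, and let R(s) = sG(s). Then: (i) R(jω) + R(jω)* ≥ 0 (positive semidefinite) for all real ω such that jω is not a pole of G(s); (ii) at every pole jω₀ of G(s) with ω₀ > 0, the residue lim_{s→jω₀}(s−jω₀)R(s) = (1/2)F(jω₀) is Hermitian positive semidefinite; and (iii) lim_{s→0} sR(s) = lim_{s→0} s²G(s) ≥ 0. In particular, R(s) is positive real. -/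
open Matrix Filter
open scoped Topology ComplexOrder

noncomputable section

/-!
On the imaginary axis, `jω G(jω) + (jω G(jω))ᴴ = ω · j(G(jω) - G(jω)ᴴ)`, which the NI property
makes positive semidefinite for `ω > 0`; likewise the residue of `s G(s)` at `jω₀` is `ω₀` times
the NI residue of `G` there, and at the origin `s · s G(s) = s² G(s)`. Since `G` has real
coefficients, `G(s̄)` is the entrywise conjugate of `G(s)`, and entrywise conjugation preserves
positive semidefiniteness (for Hermitian matrices it is transposition), so each fact passes from
`ω > 0` to `ω < 0`.
-/

open ComplexConjugate

theorem Matrix.PosSemidef.map_conj {n : Type*} [Fintype n] {K : Matrix n n ℂ}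
    (hK : K.PosSemidef) : (K.map conj).PosSemidef := by
  have hKT : K.map conj = Kᵀ := by
    ext i j
    simpa [Matrix.conjTranspose_apply] using congrFun (congrFun hK.1.eq j) i
  exact hKT ▸ hK.transpose

theorem isClosed_setOf_posSemidef {n : Type*} [Fintype n] :
    IsClosed {M : Matrix n n ℂ | M.PosSemidef} := by
  have hset : {M : Matrix n n ℂ | M.PosSemidef} =
      {M | Mᴴ = M} ∩ ⋂ x : n → ℂ, {M | 0 ≤ star x ⬝ᵥ (M *ᵥ x)} := by
    ext M; simp [Matrix.posSemidef_iff_dotProduct_mulVec, Matrix.IsHermitian]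
  rw [hset]
  refine (isClosed_eq continuous_id.matrix_conjTranspose continuous_id).inter
    (isClosed_iInter fun x => isClosed_le continuous_const ?_)
  exact continuous_const.dotProduct (continuous_id.matrix_mulVec continuous_const)

theorem tendsto_map_conj_nhdsNE {ι κ : Type*} {f : ℂ → Matrix ι κ ℂ} {a : ℂ}
    {K : Matrix ι κ ℂ} (h : Tendsto f (𝓝[≠] a) (𝓝 K)) :
    Tendsto (fun s => (f (conj s)).map conj) (𝓝[≠] (conj a)) (𝓝 (K.map conj)) := by
  have hconj : Tendsto conj (𝓝[≠] (conj a)) (𝓝[≠] a) := by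
    have hmaps : Set.MapsTo conj {conj a}ᶜ {a}ᶜ :=
      fun s hs h' => hs (by simp [← Set.mem_singleton_iff.1 h'])
    simpa using Complex.continuous_conj.continuousWithinAt (x := conj a) |>.tendsto_nhdsWithin hmaps
  exact ((continuous_id.matrix_map Complex.continuous_conj).tendsto K).comp (h.comp hconj)

theorem I_mul_smul_add_conjTranspose {n : Type*} (c : ℝ) (M : Matrix n n ℂ) :
    (Complex.I * c) • M + ((Complex.I * c) • M)ᴴ = (c : ℂ) • (Complex.I • (M - Mᴴ)) := by
  ext i j
  simp only [Matrix.add_apply, Matrix.smul_apply, Matrix.conjTranspose_apply, Matrix.sub_apply,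
    smul_eq_mul, star_mul', Complex.star_def, Complex.conj_I, Complex.conj_ofReal]
  ring

theorem conj_I_mul_ofReal (ω : ℝ) : conj (Complex.I * ω) = Complex.I * ((-ω : ℝ) : ℂ) := by
  simp

namespace NIPaper

variable {m : ℕ}

theorem ratFunc_eval_conj (f : RatFunc ℝ) (s : ℂ) :
    f.eval (algebraMap ℝ ℂ) (conj s) = conj (f.eval (algebraMap ℝ ℂ) s) := by
  simp only [RatFunc.eval, ← Polynomial.aeval_def, Polynomial.aeval_conj, map_div₀]

theorem evalTF_conj (G : TF m) (s : ℂ) : evalTF G (conj s) = (evalTF G s).map conj :=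
  funext fun i => funext fun j => ratFunc_eval_conj (G i j) s

theorem isPoleAt_conj_iff {G : TF m} {s : ℂ} : IsPoleAt G (conj s) ↔ IsPoleAt G s := by
  simp only [IsPoleAt, Polynomial.IsRoot.def, Polynomial.eval_map_algebraMap,
    Polynomial.aeval_conj, map_eq_zero]

theorem smul_evalTF_conj (G : TF m) (s : ℂ) :
    conj s • evalTF G (conj s) = (s • evalTF G s).map conj := by
  ext i j
  simp [evalTF_conj]

theorem finite_setOf_isPoleAt (G : TF m) : {s : ℂ | IsPoleAt G s}.Finite := by
  have hpoles : {s : ℂ | IsPoleAt G s} =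
      ⋃ i, ⋃ j, {s | ((G i j).denom.map (algebraMap ℝ ℂ)).IsRoot s} := by
    ext; simp [IsPoleAt]
  rw [hpoles]
  exact Set.finite_iUnion fun i => Set.finite_iUnion fun j =>
    Polynomial.finite_setOfPred_isRoot (Polynomial.map_ne_zero (RatFunc.denom_ne_zero _))

theorem eventually_not_isPoleAt (G : TF m) (a : ℂ) : ∀ᶠ s in 𝓝[≠] a, ¬ IsPoleAt G s :=
  nhdsNE_le_cofinite a (finite_setOf_isPoleAt G).eventually_cofinite_notMem

theorem eventually_not_isPoleAt_I_mul (G : TF m) (ω : ℝ) :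
    ∀ᶠ t : ℝ in 𝓝[≠] ω, ¬ IsPoleAt G (Complex.I * t) := by
  have hinj : Set.InjOn (fun t : ℝ => Complex.I * t) ((Complex.I * ·) ⁻¹' {s | IsPoleAt G s}) :=
    fun a _ b _ hab => by simpa using hab
  exact nhdsNE_le_cofinite ω ((finite_setOf_isPoleAt G).preimage hinj).eventually_cofinite_notMem

theorem tendsto_evalTF {G : TF m} {s₀ : ℂ} (h : ¬ IsPoleAt G s₀) :
    Tendsto (evalTF G) (𝓝 s₀) (𝓝 (evalTF G s₀)) := by
  refine tendsto_pi_nhds.2 fun i => tendsto_pi_nhds.2 fun j => ?_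
  have hden : (G i j).denom.eval₂ (algebraMap ℝ ℂ) s₀ ≠ 0 := by
    simpa [IsPoleAt, Polynomial.eval₂_eq_eval_map] using fun hr => h ⟨i, j, hr⟩
  simp only [evalTF, RatFunc.eval, Polynomial.eval₂_eq_eval_map] at hden ⊢
  exact ((G i j).num.map _).continuous.tendsto s₀ |>.div
    (((G i j).denom.map _).continuous.tendsto s₀) hden

theorem smul_evalTF_I_mul_neg (G : TF m) (ω : ℝ) :
    (Complex.I * ω) • evalTF G (Complex.I * ω) =
      ((Complex.I * ((-ω : ℝ) : ℂ)) • evalTF G (Complex.I * ((-ω : ℝ) : ℂ))).map conj := by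
  rw [← smul_evalTF_conj, conj_I_mul_ofReal, neg_neg]

theorem posSemidef_smul_evalTF_add_conjTranspose_of_pos {G : TF m} (hNI : IsNI G) {ω : ℝ}
    (hω : 0 < ω) (hp : ¬ IsPoleAt G (Complex.I * ω)) :
    ((Complex.I * (ω : ℂ)) • evalTF G (Complex.I * ω)
      + ((Complex.I * (ω : ℂ)) • evalTF G (Complex.I * ω))ᴴ).PosSemidef := by
  rw [I_mul_smul_add_conjTranspose]
  exact (hNI.2.1 ω hω hp).smul (Complex.zero_le_real.2 hω.le)

theorem posSemidef_smul_evalTF_add_conjTranspose {G : TF m} (hNI : IsNI G) {ω : ℝ}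
    (hω : ¬ IsPoleAt G (Complex.I * ω)) :
    ((Complex.I * (ω : ℂ)) • evalTF G (Complex.I * ω)
      + ((Complex.I * (ω : ℂ)) • evalTF G (Complex.I * ω))ᴴ).PosSemidef := by
  rcases lt_trichotomy ω 0 with hneg | rfl | hω'
  · have hp : ¬ IsPoleAt G (Complex.I * ((-ω : ℝ) : ℂ)) := by
      rwa [← conj_I_mul_ofReal, isPoleAt_conj_iff]
    have hmap := (posSemidef_smul_evalTF_add_conjTranspose_of_pos hNI (neg_pos.2 hneg) hp).map_conj
    rw [smul_evalTF_I_mul_neg]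
    convert hmap using 1
    ext i j
    simp
  · simpa using Matrix.PosSemidef.zero
  · exact posSemidef_smul_evalTF_add_conjTranspose_of_pos hNI hω' hω

theorem exists_tendsto_residue_of_pos {G : TF m} (hNI : IsNI G) {ω : ℝ} (hω : 0 < ω)
    (hp : IsPoleAt G (Complex.I * ω)) :
    ∃ K : Matrix (Fin m) (Fin m) ℂ,
      Tendsto (fun s : ℂ => (s - Complex.I * ω) • s • evalTF G s)
        (𝓝[≠] (Complex.I * (ω : ℂ))) (𝓝 K) ∧ K.PosSemidef := by
  obtain ⟨-, K, hK, hKpsd⟩ := hNI.2.2.1 ω hω hp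
  -- `(s - jω) s G(s) = (-j s) • ((s - jω) j G(s))` and `-j s → ω`
  refine ⟨(ω : ℂ) • K, ?_, hKpsd.smul (Complex.zero_le_real.2 hω.le)⟩
  have hfactor : Tendsto (fun s : ℂ => -Complex.I * s) (𝓝[≠] (Complex.I * (ω : ℂ))) (𝓝 ω) := by
    have h : -Complex.I * (Complex.I * ω) = ω := by
      rw [← mul_assoc, neg_mul, Complex.I_mul_I, neg_neg, one_mul]
    have hc := ((continuous_const_mul (-Complex.I)).tendsto (Complex.I * ω)).mono_left
      (nhdsWithin_le_nhds (s := {Complex.I * (ω : ℂ)}ᶜ))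
    rwa [h] at hc
  refine (hfactor.smul hK).congr fun s => ?_
  simp only [smul_smul]
  congr 1
  linear_combination (-(s * (s - Complex.I * (ω : ℂ)))) * Complex.I_sq

theorem exists_tendsto_sq_smul_evalTF {G : TF m} (hNI : IsNI G) :
    ∃ K : Matrix (Fin m) (Fin m) ℂ,
      Tendsto (fun s : ℂ => s • s • evalTF G s) (𝓝[≠] (0 : ℂ)) (𝓝 K) ∧ K.PosSemidef := by
  by_cases hp : IsPoleAt G 0
  · obtain ⟨-, K, hK, hKpsd⟩ := hNI.2.2.2 hp
    exact ⟨K, hK.congr fun s => by rw [sq, smul_smul], hKpsd⟩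
  · refine ⟨0, ?_, Matrix.PosSemidef.zero⟩
    have h := tendsto_id.smul (tendsto_id.smul (tendsto_evalTF hp))
    simpa using h.mono_left nhdsWithin_le_nhds

theorem exists_tendsto_residue {G : TF m} (hNI : IsNI G) {ω : ℝ}
    (hp : IsPoleAt G (Complex.I * ω)) :
    ∃ K : Matrix (Fin m) (Fin m) ℂ,
      Tendsto (fun s : ℂ => (s - Complex.I * ω) • s • evalTF G s)
        (𝓝[≠] (Complex.I * (ω : ℂ))) (𝓝 K) ∧ K.PosSemidef := by
  rcases lt_trichotomy ω 0 with hneg | rfl | hω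
  · have hp' : IsPoleAt G (Complex.I * ((-ω : ℝ) : ℂ)) := by
      rwa [← conj_I_mul_ofReal, isPoleAt_conj_iff]
    obtain ⟨K, hK, hKpsd⟩ := exists_tendsto_residue_of_pos hNI (neg_pos.2 hneg) hp'
    refine ⟨K.map conj, ?_, hKpsd.map_conj⟩
    have h := tendsto_map_conj_nhdsNE hK
    rw [conj_I_mul_ofReal, neg_neg] at h
    refine h.congr fun s => ?_
    ext i j
    simp [evalTF_conj, sub_eq_add_neg]
  · simpa using exists_tendsto_sq_smul_evalTF hNI
  · exact exists_tendsto_residue_of_pos hNI hω hp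

def mulX (G : TF m) : TF m := Matrix.of fun i j => RatFunc.X * G i j

theorem evalTF_mulX {G : TF m} {s : ℂ} (h : ¬ IsPoleAt G s) :
    evalTF (mulX G) s = s • evalTF G s := by
  ext i j
  have hden : (G i j).denom.eval₂ (algebraMap ℝ ℂ) s ≠ 0 := by
    simpa [IsPoleAt, Polynomial.eval₂_eq_eval_map] using fun hr => h ⟨i, j, hr⟩
  simp only [evalTF, mulX, Matrix.of_apply, Matrix.smul_apply, smul_eq_mul]
  rw [RatFunc.eval_mul, RatFunc.eval_X] <;> simp [hden]

theorem IsPoleAt.of_mulX {G : TF m} {s : ℂ} (h : IsPoleAt (mulX G) s) : IsPoleAt G s := by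
  obtain ⟨i, j, hr⟩ := h
  obtain ⟨r, hr'⟩ : (RatFunc.X * G i j).denom ∣ (G i j).denom := by
    simpa using RatFunc.denom_mul_dvd (RatFunc.X : RatFunc ℝ) (G i j)
  refine ⟨i, j, ?_⟩
  simp only [mulX, Matrix.of_apply] at hr
  simp [hr', Polynomial.IsRoot.def, hr.eq_zero]

theorem posSemidef_evalTF_mulX_add_conjTranspose {G : TF m}
    (hG : ∀ ω : ℝ, ¬ IsPoleAt G (Complex.I * ω) →
      ((Complex.I * (ω : ℂ)) • evalTF G (Complex.I * ω)
        + ((Complex.I * (ω : ℂ)) • evalTF G (Complex.I * ω))ᴴ).PosSemidef)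
    {ω : ℝ} (hR : ¬ IsPoleAt (mulX G) (Complex.I * ω)) :
    (evalTF (mulX G) (Complex.I * ω) + (evalTF (mulX G) (Complex.I * ω))ᴴ).PosSemidef := by
  -- `mulX G` may be regular where `G` has a pole (a simple pole of `G` at the origin), so the
  -- inequality is carried to `ω` along the imaginary axis.
  have hline : Tendsto (fun t : ℝ => evalTF (mulX G) (Complex.I * t)) (𝓝 ω)
      (𝓝 (evalTF (mulX G) (Complex.I * ω))) :=
    (tendsto_evalTF hR).comp ((continuous_const_mul _).comp Complex.continuous_ofReal).continuousAt
  have hsum := hline.add ((continuous_id.matrix_conjTranspose.tendsto _).comp hline)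
  refine isClosed_setOf_posSemidef.mem_of_tendsto
    (hsum.mono_left (nhdsWithin_le_nhds (s := {ω}ᶜ))) ?_
  filter_upwards [eventually_not_isPoleAt_I_mul G ω] with t ht
  simpa only [Set.mem_ofPred_eq, Function.comp_apply, id, evalTF_mulX ht] using hG t ht

theorem exists_tendsto_residue_mulX {G : TF m} (hNI : IsNI G) {ω : ℝ}
    (hp : IsPoleAt (mulX G) (Complex.I * ω)) :
    ∃ K : Matrix (Fin m) (Fin m) ℂ,
      Tendsto (fun s : ℂ => (s - Complex.I * ω) • evalTF (mulX G) s)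
        (𝓝[≠] (Complex.I * (ω : ℂ))) (𝓝 K) ∧ K.PosSemidef := by
  obtain ⟨K, hK, hKpsd⟩ := exists_tendsto_residue hNI hp.of_mulX
  refine ⟨K, hK.congr' ?_, hKpsd⟩
  filter_upwards [eventually_not_isPoleAt G _] with s hs
  rw [evalTF_mulX hs]

theorem isPR_mulX {G : TF m} (hNI : IsNI G) : IsPR (mulX G) :=
  ⟨fun s hs hp => hNI.1 s hs hp.of_mulX,
    fun _ => posSemidef_evalTF_mulX_add_conjTranspose
      fun _ => posSemidef_smul_evalTF_add_conjTranspose hNI,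
    fun _ => exists_tendsto_residue_mulX hNI⟩

theorem stmt18_general {m : ℕ}
    (G : TF m)
    (hNI : IsNI G) :
    (∀ ω : ℝ, ¬ IsPoleAt G (Complex.I * ω) →
      ((Complex.I * (ω : ℂ)) • evalTF G (Complex.I * ω)
        + ((Complex.I * (ω : ℂ)) • evalTF G (Complex.I * ω))ᴴ).PosSemidef) ∧
    (∀ ω : ℝ, 0 < ω → IsPoleAt G (Complex.I * ω) →
      ∃ K : Matrix (Fin m) (Fin m) ℂ,
        Tendsto (fun s : ℂ => (s - Complex.I * ω) • s • evalTF G s)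
          (𝓝[≠] (Complex.I * (ω : ℂ))) (𝓝 K) ∧ K.PosSemidef) ∧
    (∃ K : Matrix (Fin m) (Fin m) ℂ,
      Tendsto (fun s : ℂ => s • s • evalTF G s) (𝓝[≠] (0 : ℂ)) (𝓝 K) ∧ K.PosSemidef) ∧
    IsPR (Matrix.of fun i j => (RatFunc.X : RatFunc ℝ) * G i j) :=
  ⟨fun _ => posSemidef_smul_evalTF_add_conjTranspose hNI,
    fun _ hω => exists_tendsto_residue_of_pos hNI hω,
    exists_tendsto_sq_smul_evalTF hNI,
    isPR_mulX hNI⟩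

/-- From the proof of Lemma 4: `R(s) = s G(s)` is positive real when `G` is NI with a
minimal block-structured realization. -/
theorem stmt18 {m n1 n2 k : ℕ}
    (G : TF m)
    (A1 : Matrix (Fin n1) (Fin n1) ℝ) (hA1 : IsUnit A1)
    (B1 : Matrix (Fin n1) (Fin m) ℝ) (B2 : Matrix (Fin n2) (Fin m) ℝ)
    (B3a B3b : Matrix (Fin k) (Fin m) ℝ)
    (C1 : Matrix (Fin m) (Fin n1) ℝ) (C2 : Matrix (Fin m) (Fin n2) ℝ)
    (C3a C3b : Matrix (Fin m) (Fin k) ℝ)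
    (A : Matrix (Fin n1 ⊕ (Fin n2 ⊕ (Fin k ⊕ Fin k))) (Fin n1 ⊕ (Fin n2 ⊕ (Fin k ⊕ Fin k))) ℝ)
    (B : Matrix (Fin n1 ⊕ (Fin n2 ⊕ (Fin k ⊕ Fin k))) (Fin m) ℝ)
    (C : Matrix (Fin m) (Fin n1 ⊕ (Fin n2 ⊕ (Fin k ⊕ Fin k))) ℝ)
    (hA : A = Matrix.fromBlocks A1 0 0
        (Matrix.fromBlocks (0 : Matrix (Fin n2) (Fin n2) ℝ) 0 0
          (Matrix.fromBlocks 0 (1 : Matrix (Fin k) (Fin k) ℝ) 0 0)))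
    (hB : B = Matrix.fromRows B1 (Matrix.fromRows B2 (Matrix.fromRows B3a B3b)))
    (hC : C = Matrix.fromCols C1 (Matrix.fromCols C2 (Matrix.fromCols C3a C3b)))
    (hreal : IsRealization G A B C 0) (hmin : Minimal A B C) (hNI : IsNI G) :
    (∀ ω : ℝ, ¬ IsPoleAt G (Complex.I * ω) →
      ((Complex.I * (ω : ℂ)) • evalTF G (Complex.I * ω)
        + ((Complex.I * (ω : ℂ)) • evalTF G (Complex.I * ω))ᴴ).PosSemidef) ∧
    (∀ ω : ℝ, 0 < ω → IsPoleAt G (Complex.I * ω) →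
      ∃ K : Matrix (Fin m) (Fin m) ℂ,
        Tendsto (fun s : ℂ => (s - Complex.I * ω) • s • evalTF G s)
          (𝓝[≠] (Complex.I * (ω : ℂ))) (𝓝 K) ∧ K.PosSemidef) ∧
    (∃ K : Matrix (Fin m) (Fin m) ℂ,
      Tendsto (fun s : ℂ => s • s • evalTF G s) (𝓝[≠] (0 : ℂ)) (𝓝 K) ∧ K.PosSemidef) ∧
    IsPR (Matrix.of fun i j => (RatFunc.X : RatFunc ℝ) * G i j) :=
  stmt18_general G hNI

end NIPaper
end
end
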